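/- Let π be a set of primes, G a finite group, N a normal subgroup of G and H a subgroup with N ≤ H ≤ G. If H/N is N^π-Dsubnormal in G/N, then H is N^π-Dsubnormal in G. -/

import Mathlib

/-- A (finite) group is a `π`-group if every prime dividing its order lies in `π`. -/
def IsPiGroup (π : Set ℕ) (G : Type*) [Group G] : Prop :=
  ∀ p : ℕ, p.Prime → p ∣ Nat.card G → p ∈ π

/-- `O^π(G)`: the smallest normal subgroup of `G` whose quotient is a `π`-group
(recall that `N.index = Nat.card (G ⧸ N)`). -/
def piResidual (π : Set ℕ) (G : Type*) [Group G] : Subgroup G :=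
  ⨅ N ∈ {N : Subgroup G | N.Normal ∧ ∀ p : ℕ, p.Prime → p ∣ N.index → p ∈ π}, N

/-- `O_π(G)`: the largest normal `π`-subgroup of `G`. -/
def piCore (π : Set ℕ) (G : Type*) [Group G] : Subgroup G :=
  ⨆ N ∈ {N : Subgroup G | N.Normal ∧ IsPiGroup π N}, N

/-- `O^π(H)` for a subgroup `H ≤ G`, regarded as a subgroup of `G`. -/
def piResidualIn (π : Set ℕ) {G : Type*} [Group G] (H : Subgroup G) : Subgroup G :=
  (piResidual π H).map H.subtype

/-- `H` is `N^π`-Dnormal in `G`: if `|π| ≤ 1` this means `H` is normal in `G`; if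
`|π| ≥ 2` it means that `O^π(H)` is normal in `G` and `O^π(G)` normalizes `H`. -/
def IsDnormal (π : Set ℕ) {G : Type*} [Group G] (H : Subgroup G) : Prop :=
  (π.Subsingleton ∧ H.Normal) ∨
  (¬ π.Subsingleton ∧ (piResidualIn π H).Normal ∧ piResidual π G ≤ Subgroup.normalizer (H : Set G))

/-- `S` is `N^π`-Dsubnormal in `G`: there is a chain `S = S₀ ≤ S₁ ≤ ⋯ ≤ Sₙ = G`
with each `Sᵢ` being `N^π`-Dnormal in `Sᵢ₊₁`. -/
def IsDsubnormal (π : Set ℕ) {G : Type*} [Group G] (S : Subgroup G) : Prop :=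
  ∃ (n : ℕ) (c : Fin (n + 1) → Subgroup G), c 0 = S ∧ c (Fin.last n) = ⊤ ∧
    ∀ i : Fin n, c i.castSucc ≤ c i.succ ∧
      IsDnormal π ((c i.castSucc).subgroupOf (c i.succ))

/-- `H` is subnormal in `G`. -/
def IsSubnormal' {G : Type*} [Group G] (H : Subgroup G) : Prop :=
  ∃ (n : ℕ) (c : Fin (n + 1) → Subgroup G), c 0 = H ∧ c (Fin.last n) = ⊤ ∧
    ∀ i : Fin n, c i.castSucc ≤ c i.succ ∧
      ((c i.castSucc).subgroupOf (c i.succ)).Normal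

/-- The class `N^π`: groups that are the (internal) direct product of a `π`-group and a
nilpotent `π'`-group. -/
def IsNPiGroup (π : Set ℕ) (G : Type*) [Group G] : Prop :=
  ∃ H K : Subgroup G, H.Normal ∧ K.Normal ∧ H ⊓ K = ⊥ ∧ H ⊔ K = ⊤ ∧
    IsPiGroup π H ∧ IsPiGroup πᶜ K ∧ Group.IsNilpotent K

/-- The `N^π`-residual `G^{N^π}`: the smallest normal subgroup of `G` whose quotient
belongs to the class `N^π`. -/
def nPiResidual (π : Set ℕ) (G : Type*) [Group G] : Subgroup G :=
  ⨅ N ∈ {N : Subgroup G | ∃ h : N.Normal, letI := h; IsNPiGroup π (G ⧸ N)}, N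

/-- `G` is `π'`-soluble: it has a normal series each of whose factors is either a
`π`-group or a `p`-group for some prime `p ∉ π`. -/
def IsPiPrimeSoluble (π : Set ℕ) (G : Type*) [Group G] : Prop :=
  ∃ (n : ℕ) (c : Fin (n + 1) → Subgroup G), c 0 = ⊥ ∧ c (Fin.last n) = ⊤ ∧
    ∀ i : Fin n, c i.castSucc ≤ c i.succ ∧
      ((c i.castSucc).subgroupOf (c i.succ)).Normal ∧
      ((∀ p : ℕ, p.Prime → p ∣ ((c i.castSucc).subgroupOf (c i.succ)).index → p ∈ π) ∨
        ∃ p : ℕ, p.Prime ∧ p ∉ π ∧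
          ∃ k : ℕ, ((c i.castSucc).subgroupOf (c i.succ)).index = p ^ k)

/-- An `N^π`-Fitting set of `G`. -/
def IsNPiFittingSet (π : Set ℕ) {G : Type*} [Group G] (F : Set (Subgroup G)) : Prop :=
  F.Nonempty ∧
  (∀ S ∈ F, ∀ T : Subgroup G, T ≤ S → IsDsubnormal π (T.subgroupOf S) → T ∈ F) ∧
  (∀ S ∈ F, ∀ T ∈ F, IsDnormal π (S.subgroupOf (S ⊔ T)) →
    IsDnormal π (T.subgroupOf (S ⊔ T)) → S ⊔ T ∈ F) ∧
  (∀ S ∈ F, ∀ x : G, S.map (MulAut.conj x).toMonoidHom ∈ F)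

/-- The `F`-radical `H_F` of a subgroup `H` of `G`: the join of all subgroups of `H`
belonging to `F` that are normal in `H`. -/
def fittingRadical {G : Type*} [Group G] (F : Set (Subgroup G)) (H : Subgroup G) : Subgroup G :=
  ⨆ S ∈ {S : Subgroup G | S ∈ F ∧ S ≤ H ∧ (S.subgroupOf H).Normal}, S

/-- `M` is an `F`-maximal subgroup of `K`. -/
def IsFMaximalIn {G : Type*} [Group G] (F : Set (Subgroup G)) (M K : Subgroup G) : Prop :=
  M ∈ F ∧ M ≤ K ∧ ∀ S ∈ F, S ≤ K → M ≤ S → S = M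

/-- `V` is an `F`-injector of `G`. -/
def IsInjector {G : Type*} [Group G] (F : Set (Subgroup G)) (V : Subgroup G) : Prop :=
  ∀ K : Subgroup G, IsSubnormal' K → IsFMaximalIn F (V ⊓ K) K

/-- `V` is an `F`-injector of the subgroup `N` of `G`. -/
def IsInjectorIn {G : Type*} [Group G] (F : Set (Subgroup G)) (V N : Subgroup G) : Prop :=
  V ≤ N ∧ ∀ K : Subgroup G, K ≤ N → IsSubnormal' (K.subgroupOf N) → IsFMaximalIn F (V ⊓ K) K

/-- `M` is an `N^π`-maximal subgroup of `X`. -/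
def IsNPiMaximal (π : Set ℕ) {X : Type*} [Group X] (M : Subgroup X) : Prop :=
  IsNPiGroup π M ∧ ∀ M' : Subgroup X, IsNPiGroup π M' → M ≤ M' → M' = M

/-- `U` is an `N^π`-projector of `G`: `UK/K` is `N^π`-maximal in `G/K` for every
normal subgroup `K` of `G`. -/
def IsNPiProjector (π : Set ℕ) {G : Type*} [Group G] (U : Subgroup G) : Prop :=
  ∀ K : Subgroup G, ∀ hK : K.Normal,
    letI := hK
    IsNPiMaximal π ((U ⊔ K).map (QuotientGroup.mk' K))

/-- An `N^π`-Fitting class of (finite) groups: a non-empty isomorphism-closed class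
closed under `N^π`-Dnormal subgroups and under joins of pairs of `N^π`-Dnormal
subgroups. -/
def IsNPiFittingClass (π : Set ℕ) (F : (H : Type) → [_inst : Group H] → Prop) : Prop :=
  (∃ (H : Type) (g : Group H) (_ : Finite H), F H (_inst := g)) ∧
  (∀ (H K : Type) [Group H] [Group K] [Finite H] [Finite K],
    F H → Nonempty (H ≃* K) → F K) ∧
  (∀ (H : Type) [Group H] [Finite H] (N : Subgroup H),
    F H → IsDnormal π N → F ↥N) ∧
  (∀ (H : Type) [Group H] [Finite H] (M N : Subgroup H),
    F ↥M → F ↥N → IsDnormal π M → IsDnormal π N → M ⊔ N = ⊤ → F H)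

/-!
A normal subgroup of `G` of `π`-index contains `O^π(G)`, and `O^π(G)` itself has `π`-index, so
`O^π` commutes with surjective homomorphisms and is characteristic. For `f : G → Q` surjective and
`A ≤ Q`, the preimage `M = f⁻¹(O^π(A))` has `π`-index in `f⁻¹(A)`; hence
`O^π(f⁻¹(A)) = O^π(M)`, which is normal in `G` as soon as `O^π(A)` is normal in `Q`. Together
with `f(O^π(G)) = O^π(Q)` this pulls `N^π`-Dnormality, and then whole Dsubnormal chains, back
along `f`. Applied to `G → G/N`, the preimage of `H/N` is `H`.
-/

def IsPiNumber (π : Set ℕ) (n : ℕ) : Prop :=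
  ∀ p : ℕ, p.Prime → p ∣ n → p ∈ π

namespace IsPiNumber

variable {π : Set ℕ} {m n : ℕ}

theorem one : IsPiNumber π 1 := fun _ hp hd => absurd (Nat.dvd_one.mp hd) hp.ne_one

theorem of_dvd (hn : IsPiNumber π n) (hmn : m ∣ n) : IsPiNumber π m :=
  fun p hp hd => hn p hp (hd.trans hmn)

theorem mul (hm : IsPiNumber π m) (hn : IsPiNumber π n) : IsPiNumber π (m * n) :=
  fun p hp hd => (hp.dvd_mul.mp hd).elim (hm p hp) (hn p hp)

end IsPiNumber

section PiResidual

variable {π : Set ℕ} {G G' : Type*} [Group G] [Group G']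

instance piResidual_normal : (piResidual π G).Normal :=
  Subgroup.normal_iInf_normal fun _ => Subgroup.normal_iInf_normal fun hN => hN.1

theorem piResidual_le {N : Subgroup G} (hN : N.Normal) (hidx : IsPiNumber π N.index) :
    piResidual π G ≤ N :=
  iInf₂_le N ⟨hN, hidx⟩

theorem isPiNumber_index_inf {A B : Subgroup G} [B.Normal] (hA : IsPiNumber π A.index)
    (hB : IsPiNumber π B.index) : IsPiNumber π (A ⊓ B).index := by
  rw [← Subgroup.relIndex_mul_index (inf_le_left : A ⊓ B ≤ A), Subgroup.inf_relIndex_left]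
  exact (hB.of_dvd (Subgroup.relIndex_dvd_index_of_normal B A)).mul hA

theorem isPiNumber_index_piResidual [Finite G] : IsPiNumber π (piResidual π G).index := by
  let S : Set (Subgroup G) := {N | N.Normal ∧ IsPiNumber π N.index}
  have hS : InfClosed S := fun A ⟨hA, hAidx⟩ B ⟨hB, hBidx⟩ =>
    ⟨Subgroup.normal_inf_normal A B, isPiNumber_index_inf hAidx hBidx⟩
  have htop : ⊤ ∈ S := ⟨inferInstance, by simpa using IsPiNumber.one⟩
  exact (hS.biInf_mem S.toFinite htop fun _ hN => hN).2

theorem map_piResidual_of_surjective [Finite G] {f : G →* G'} (hf : Function.Surjective f) :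
    (piResidual π G).map f = piResidual π G' := by
  have : Finite G' := Finite.of_surjective f hf
  refine le_antisymm ?_ ?_
  · refine Subgroup.map_le_iff_le_comap.mpr (piResidual_le inferInstance ?_)
    rw [Subgroup.index_comap_of_surjective _ hf]
    exact isPiNumber_index_piResidual
  · refine piResidual_le (Subgroup.Normal.map inferInstance f hf) ?_
    exact isPiNumber_index_piResidual.of_dvd (Subgroup.index_map_dvd _ hf)

instance piResidual_characteristic [Finite G] : (piResidual π G).Characteristic :=
  Subgroup.characteristic_iff_map_eq.mpr fun e => map_piResidual_of_surjective e.surjective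

end PiResidual

section PiResidualIn

variable {π : Set ℕ} {G : Type*} [Group G]

theorem piResidualIn_le (H : Subgroup G) : piResidualIn π H ≤ H :=
  Subgroup.map_subtype_le _

theorem isPiNumber_relIndex_piResidualIn [Finite G] (H : Subgroup G) :
    IsPiNumber π ((piResidualIn π H).relIndex H) := by
  rw [Subgroup.relIndex, piResidualIn, Subgroup.subgroupOf,
    Subgroup.comap_map_eq_self_of_injective H.subtype_injective]
  exact isPiNumber_index_piResidual

theorem piResidualIn_normalizer (H : Subgroup G) :
    H ≤ Subgroup.normalizer (piResidualIn π H : Set G) := by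
  rw [← Subgroup.normal_subgroupOf_iff_le_normalizer (piResidualIn_le H), Subgroup.subgroupOf,
    piResidualIn, Subgroup.comap_map_eq_self_of_injective H.subtype_injective]
  infer_instance

theorem piResidualIn_le_of_normal {H L : Subgroup G} (hL : (L.subgroupOf H).Normal)
    (hidx : IsPiNumber π (L.relIndex H)) : piResidualIn π H ≤ L :=
  calc piResidualIn π H ≤ (L.subgroupOf H).map H.subtype :=
        Subgroup.map_mono (piResidual_le hL hidx)
    _ ≤ L := by rw [Subgroup.subgroupOf_map_subtype]; exact inf_le_left

instance piResidualIn_normal [Finite G] (M : Subgroup G) [M.Normal] :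
    (piResidualIn π M).Normal :=
  ConjAct.normal_of_characteristic_of_normal

theorem piResidualIn_eq_of_le [Finite G] {M K : Subgroup G} [M.Normal] (hMK : M ≤ K)
    (hidx : IsPiNumber π (M.relIndex K)) : piResidualIn π M = piResidualIn π K := by
  have hKM : piResidualIn π K ≤ M := piResidualIn_le_of_normal inferInstance hidx
  refine le_antisymm (piResidualIn_le_of_normal ?_ ?_) (piResidualIn_le_of_normal inferInstance ?_)
  · rw [Subgroup.normal_subgroupOf_iff_le_normalizer hKM]
    exact hMK.trans (piResidualIn_normalizer K)
  · exact (isPiNumber_relIndex_piResidualIn K).of_dvd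
      (Dvd.intro _ (Subgroup.relIndex_mul_relIndex _ _ _ hKM hMK))
  · rw [← Subgroup.relIndex_mul_relIndex _ _ _ (piResidualIn_le M) hMK]
    exact (isPiNumber_relIndex_piResidualIn M).mul hidx

end PiResidualIn

section Pullback

variable {π : Set ℕ} {G Q : Type*} [Group G] [Group Q] [Finite G] {f : G →* Q}

theorem IsDnormal.comap (hf : Function.Surjective f) {A : Subgroup Q} (hA : IsDnormal π A) :
    IsDnormal π (A.comap f) := by
  have : Finite Q := Finite.of_surjective f hf
  rcases hA with ⟨hπ, hA⟩ | ⟨hπ, hres, hnorm⟩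
  · exact Or.inl ⟨hπ, hA.comap f⟩
  · refine Or.inr ⟨hπ, ?_, ?_⟩
    · have : ((piResidualIn π A).comap f).Normal := hres.comap f
      rw [← piResidualIn_eq_of_le (Subgroup.comap_mono (piResidualIn_le (π := π) A))]
      · infer_instance
      · rw [Subgroup.relIndex_comap, Subgroup.map_comap_eq_self_of_surjective hf]
        exact isPiNumber_relIndex_piResidualIn A
    · calc piResidual π G ≤ (piResidual π Q).comap f :=
            Subgroup.map_le_iff_le_comap.mp (map_piResidual_of_surjective hf).le
        _ ≤ (Subgroup.normalizer (A : Set Q)).comap f := Subgroup.comap_mono hnorm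
        _ ≤ Subgroup.normalizer (A.comap f : Set G) := Subgroup.le_normalizer_comap f

theorem IsDsubnormal.comap (hf : Function.Surjective f) {A : Subgroup Q}
    (hA : IsDsubnormal π A) : IsDsubnormal π (A.comap f) := by
  obtain ⟨n, c, hc0, hcn, hstep⟩ := hA
  refine ⟨n, fun i => (c i).comap f, congrArg _ hc0,
    (congrArg _ hcn).trans (Subgroup.comap_top f), fun i => ?_⟩
  obtain ⟨hle, hD⟩ := hstep i
  exact ⟨Subgroup.comap_mono hle, hD.comap (f.subgroupComap_surjective_of_surjective _ hf)⟩

end Pullback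

theorem dsubnormal_of_quotient_general (π : Set ℕ)
    (G : Type*) [Group G] [Finite G] (N H : Subgroup G) [N.Normal] (hNH : N ≤ H)
    (h : IsDsubnormal π (H.map (QuotientGroup.mk' N))) :
    IsDsubnormal π H := by
  have hpull := h.comap (QuotientGroup.mk'_surjective N)
  rwa [Subgroup.comap_map_eq_self (by rwa [QuotientGroup.ker_mk'])] at hpull

/-- Lemma 1.4(5): if `N ≤ H` and `H/N` is `N^π`-Dsubnormal in `G/N`, then `H` is
`N^π`-Dsubnormal in `G`. -/
theorem dsubnormal_of_quotient (π : Set ℕ) (hπ : ∀ p ∈ π, p.Prime)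
    (G : Type*) [Group G] [Finite G] (N H : Subgroup G) [N.Normal] (hNH : N ≤ H)
    (h : IsDsubnormal π (H.map (QuotientGroup.mk' N))) :
    IsDsubnormal π H :=
  dsubnormal_of_quotient_general π G N H hNH h
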